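/- arXiv:math/0701794 — 2 statements merged into one kernel-verified Lean document; each statement's English description precedes it below -/
import Mathlib

section
/- Let k ≥ 0 and 1 ≤ l < 2 with k + l > 1, and set a = ((k+1)/(2-l))^(1/(k+1)). If u is the solution of u' = (1 - ((2-l)/(k+1)) u^(k+1))^(1/(2-l)) with u(0) = 0, defined on a maximal interval [0,T) on which 0 ≤ u < a, then T = ∞. (Key estimate: 0 ≤ a^(k+1) − u^(k+1) ≤ (k+1) a^k (a − u) together with 1/(l−2) ≤ −1 forces the time integral ∫₀^a (a^(k+1) − v^(k+1))^(1/(l-2)) dv to diverge.) -/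
open Real Set

/-- For `1 ≤ l < 2`, the solution of `u' = (1 - ((2-l)/(k+1)) u^(k+1))^(1/(2-l))`,
`u(0) = 0`, staying in `0 ≤ u < a` with `a = ((k+1)/(2-l))^(1/(k+1))`, is global:
it extends to a solution on all of `[0,∞)` with `0 ≤ u < a`. -/
theorem stmt_3 (k l : ℝ) (hk : 0 ≤ k) (hl1 : 1 ≤ l) (hl2 : l < 2) (hkl : 1 < k + l)
    (a : ℝ) (ha : a = ((k + 1) / (2 - l)) ^ ((1 : ℝ) / (k + 1)))
    (T : ℝ) (hT : 0 < T)
    (u : ℝ → ℝ) (h0 : u 0 = 0)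
    (hode : ∀ t ∈ Ico (0 : ℝ) T,
      HasDerivAt u ((1 - (2 - l) / (k + 1) * (u t) ^ (k + 1)) ^ ((1 : ℝ) / (2 - l))) t)
    (hrange : ∀ t ∈ Ico (0 : ℝ) T, 0 ≤ u t ∧ u t < a) :
    ∃ v : ℝ → ℝ, v 0 = 0 ∧ (∀ t ∈ Ico (0 : ℝ) T, v t = u t) ∧
      ∀ t : ℝ, 0 ≤ t →
        HasDerivAt v ((1 - (2 - l) / (k + 1) * (v t) ^ (k + 1)) ^ ((1 : ℝ) / (2 - l))) t ∧
          0 ≤ v t ∧ v t < a := by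
  have hl2' : 0 < 2 - l := by linarith
  have hk1 : 0 < k + 1 := by linarith
  set c := (2 - l) / (k + 1) with hc_def
  have hc : 0 < c := div_pos hl2' hk1
  set q := (1 : ℝ) / (2 - l) with hq_def
  have hq1 : 1 ≤ q := by rw [hq_def, le_div_iff₀ hl2']; linarith
  have hq0 : 0 ≤ q := by linarith
  have ha0 : 0 < a := by rw [ha]; positivity
  have hak : a ^ (k + 1) = (k + 1) / (2 - l) := by
    rw [ha, ← Real.rpow_mul (by positivity),
      one_div_mul_cancel (by positivity : (k + 1) ≠ 0), Real.rpow_one]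
  have hca : c * a ^ (k + 1) = 1 := by
    rw [hak, hc_def]; field_simp
  set P : ℝ → ℝ := fun s => 1 - c * (max s 0) ^ (k + 1) with hP_def
  set g : ℝ → ℝ := fun s => ((P s) ^ q)⁻¹ with hg_def
  have hP_pos : ∀ s < a, 0 < P s := by
    intro s hs
    have h1 : (max s 0) ^ (k + 1) < a ^ (k + 1) :=
      Real.rpow_lt_rpow (le_max_right s 0) (max_lt hs ha0) (by positivity)
    have h2 : c * (max s 0) ^ (k + 1) < c * a ^ (k + 1) := by
      exact mul_lt_mul_of_pos_left h1 hc
    rw [hca] at h2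
    simp only [hP_def]; linarith
  have hP_le1 : ∀ s, P s ≤ 1 := by
    intro s
    have h1 : 0 ≤ (max s 0) ^ (k + 1) := Real.rpow_nonneg (le_max_right s 0) _
    have := mul_nonneg hc.le h1
    simp only [hP_def]; linarith
  have hPq_pos : ∀ s < a, 0 < P s ^ q := fun s hs => Real.rpow_pos_of_pos (hP_pos s hs) q
  have hg_pos : ∀ s < a, 0 < g s := fun s hs => inv_pos.mpr (hPq_pos s hs)
  have hP_cont : Continuous P := by
    have hrc : Continuous fun s : ℝ => (max s 0) ^ (k + 1) := by
      rw [continuous_iff_continuousAt]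
      intro s
      exact (Real.continuousAt_rpow_const _ _ (Or.inr (by positivity))).comp
        ((continuous_id.max continuous_const).continuousAt)
    exact continuous_const.sub (continuous_const.mul hrc)
  have hg_ca : ∀ s < a, ContinuousAt g s := by
    intro s hs
    exact ((Real.continuousAt_rpow_const (P s) q
      (Or.inl (hP_pos s hs).ne')).comp hP_cont.continuousAt).inv₀ (hPq_pos s hs).ne'
  have hg_co : ContinuousOn g (Iio a) := fun s hs => (hg_ca s hs).continuousWithinAt
  set F : ℝ → ℝ := fun y => ∫ s in (0 : ℝ)..y, g s with hF_def
  have hsub : ∀ y < a, uIcc (0 : ℝ) y ⊆ Iio a := by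
    intro y hy s hs
    exact lt_of_le_of_lt hs.2 (max_lt ha0 hy)
  have hF_int : ∀ y < a, IntervalIntegrable g MeasureTheory.volume 0 y :=
    fun y hy => (hg_co.mono (hsub y hy)).intervalIntegrable
  have hF_deriv : ∀ y < a, HasDerivAt F (g y) y := by
    intro y hy
    exact intervalIntegral.integral_hasDerivAt_right (hF_int y hy)
      (hg_co.stronglyMeasurableAtFilter isOpen_Iio y hy) (hg_ca y hy)
  have hF_co : ContinuousOn F (Iio a) :=
    fun y hy => (hF_deriv y hy).continuousAt.continuousWithinAt
  have hF_mono : StrictMonoOn F (Iio a) := by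
    apply strictMonoOn_of_deriv_pos (convex_Iio a) hF_co
    intro x hx
    rw [interior_Iio] at hx
    rw [(hF_deriv x hx).deriv]
    exact hg_pos x hx
  have hF0 : F 0 = 0 := intervalIntegral.integral_same
  have hF_neg : ∀ y ≤ 0, F y = y := by
    intro y hy
    have hg1 : EqOn g (fun _ => (1 : ℝ)) (uIcc 0 y) := by
      intro s hs
      have hs0 : s ≤ 0 := le_trans hs.2 (by simp [hy])
      have : max s 0 = 0 := max_eq_right hs0
      simp only [hg_def, hP_def, this, Real.zero_rpow (by positivity : k + 1 ≠ 0)]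
      norm_num
    have hcongr : F y = ∫ _ in (0:ℝ)..y, (1:ℝ) := intervalIntegral.integral_congr hg1
    rw [hcongr, intervalIntegral.integral_const, smul_eq_mul]
    ring
  set M := c * ((k + 1) * a ^ k) with hM_def
  have hM : 0 < M := mul_pos hc (mul_pos hk1 (Real.rpow_pos_of_pos ha0 k))
  have hBer : ∀ s, 0 ≤ s → s < a → P s ≤ M * (a - s) := by
    intro s hs0 hsa
    have hApos : 0 < a ^ (k + 1) := Real.rpow_pos_of_pos ha0 _
    have hx : (-1 : ℝ) ≤ s / a - 1 := by
      have : 0 ≤ s / a := div_nonneg hs0 ha0.le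
      linarith
    have hB := one_add_mul_self_le_rpow_one_add hx (by linarith : (1 : ℝ) ≤ k + 1)
    rw [show (1 + (s / a - 1)) = s / a by ring] at hB
    have hdiv : (s / a) ^ (k + 1) = s ^ (k + 1) / a ^ (k + 1) := Real.div_rpow hs0 ha0.le _
    have hB' : (1 + (k + 1) * (s / a - 1)) * a ^ (k + 1) ≤ s ^ (k + 1) := by
      calc (1 + (k + 1) * (s / a - 1)) * a ^ (k + 1)
          ≤ (s / a) ^ (k + 1) * a ^ (k + 1) := mul_le_mul_of_nonneg_right hB hApos.le
        _ = s ^ (k + 1) := by rw [hdiv]; field_simp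
    have haa : a ^ (k + 1) = a ^ k * a := by
      rw [Real.rpow_add ha0, Real.rpow_one]
    have key : (1 + (k + 1) * (s / a - 1)) * a ^ (k + 1)
        = a ^ (k + 1) - (k + 1) * a ^ k * (a - s) := by
      rw [haa]; field_simp; ring
    rw [key] at hB'
    have h1 : a ^ (k + 1) - s ^ (k + 1) ≤ (k + 1) * a ^ k * (a - s) := by linarith
    have hm : max s 0 = s := max_eq_left hs0
    simp only [hP_def, hm, hM_def]
    nlinarith [mul_le_mul_of_nonneg_left h1 hc.le]
  set b0 := max 0 (a - M⁻¹) with hb0_def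
  have hb00 : 0 ≤ b0 := le_max_left _ _
  have hb0a : b0 < a := max_lt ha0 (by linarith [inv_pos.mpr hM])
  have hg_lb : ∀ s, b0 ≤ s → s < a → (M * (a - s))⁻¹ ≤ g s := by
    intro s hbs hsa
    have hs0 : 0 ≤ s := le_trans hb00 hbs
    have h2 : a - s ≤ M⁻¹ := by
      have := le_trans (le_max_right 0 (a - M⁻¹)) hbs
      linarith
    have hMs : M * (a - s) ≤ 1 := by
      calc M * (a - s) ≤ M * M⁻¹ := mul_le_mul_of_nonneg_left h2 hM.le
        _ = 1 := mul_inv_cancel₀ hM.ne'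
    have hMspos : 0 < M * (a - s) := mul_pos hM (by linarith)
    have h3 : P s ^ q ≤ (M * (a - s)) ^ q :=
      Real.rpow_le_rpow (hP_pos s hsa).le (hBer s hs0 hsa) hq0
    have h4 : (M * (a - s)) ^ q ≤ (M * (a - s)) ^ (1 : ℝ) :=
      Real.rpow_le_rpow_of_exponent_ge hMspos hMs hq1
    rw [Real.rpow_one] at h4
    exact inv_anti₀ (hPq_pos s hsa) (h3.trans h4)
  have hder2 : ∀ x < a, HasDerivAt (fun y : ℝ => Real.log (a - y)) (-(a - x)⁻¹) x := by
    intro x hx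
    have h1 : HasDerivAt (fun y : ℝ => a - y) (-1) x := (hasDerivAt_id x).const_sub a
    have := (Real.hasDerivAt_log (sub_ne_zero.mpr hx.ne')).comp x h1
    simp only [mul_neg, mul_one] at this
    exact this
  have hcomp : ∀ y, b0 ≤ y → y < a →
      F b0 + (Real.log (a - b0) - Real.log (a - y)) / M ≤ F y := by
    intro y hby hya
    set h : ℝ → ℝ := fun y => F y - (Real.log (a - b0) - Real.log (a - y)) / M with hh_def
    have hh : ∀ x < a, HasDerivAt h (g x - (a - x)⁻¹ / M) x := by
      intro x hx
      have h1 := (hF_deriv x hx).sub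
        (((hasDerivAt_const x (Real.log (a - b0))).sub (hder2 x hx)).div_const M)
      rw [show g x - (a - x)⁻¹ / M = g x - (0 - -(a - x)⁻¹) / M by ring]
      exact h1
    have hmono : MonotoneOn h (Ico b0 a) := by
      apply monotoneOn_of_deriv_nonneg (convex_Ico b0 a)
      · exact fun x hx => (hh x hx.2).continuousAt.continuousWithinAt
      · rw [interior_Ico]
        exact fun x hx => (hh x hx.2).differentiableAt.differentiableWithinAt
      · rw [interior_Ico]
        intro x hx
        rw [(hh x hx.2).deriv]
        have := hg_lb x hx.1.le hx.2
        rw [mul_inv] at this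
        have hrw : (a - x)⁻¹ / M = M⁻¹ * (a - x)⁻¹ := by ring
        linarith [hrw ▸ this]
    have := hmono ⟨le_refl b0, hb0a⟩ ⟨hby, hya⟩ hby
    simp only [hh_def, sub_self, zero_div] at this
    linarith
  have hunb : ∀ t : ℝ, ∃ y, 0 ≤ y ∧ y < a ∧ t ≤ F y := by
    intro t
    by_cases ht : t ≤ F b0
    · exact ⟨b0, hb00, hb0a, ht⟩
    push_neg at ht
    set ε := (a - b0) * Real.exp (-(M * (t - F b0)) - 1) with hε_def
    have hab0 : 0 < a - b0 := by linarith
    have hε0 : 0 < ε := mul_pos hab0 (Real.exp_pos _)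
    have hε1 : ε < a - b0 := by
      have hlt : Real.exp (-(M * (t - F b0)) - 1) < 1 := by
        rw [Real.exp_lt_one_iff]
        nlinarith [mul_pos hM (sub_pos.mpr ht)]
      calc ε < (a - b0) * 1 := by
            exact mul_lt_mul_of_pos_left hlt hab0
        _ = a - b0 := mul_one _
    set y := a - ε with hy_def
    have hby : b0 ≤ y := by simp only [hy_def]; linarith
    have hya : y < a := by simp only [hy_def]; linarith
    have hlogε : Real.log ε = Real.log (a - b0) + (-(M * (t - F b0)) - 1) := by
      rw [hε_def, Real.log_mul hab0.ne' (Real.exp_pos _).ne', Real.log_exp]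
    have hay : a - y = ε := by simp [hy_def]
    have hcalc : (Real.log (a - b0) - Real.log (a - y)) / M = (t - F b0) + M⁻¹ := by
      rw [hay, hlogε]
      field_simp
      ring
    have := hcomp y hby hya
    rw [hcalc] at this
    refine ⟨y, by linarith, hya, by linarith [inv_pos.mpr hM]⟩
  have hsurj : ∀ t : ℝ, ∃ y, y < a ∧ F y = t := by
    intro t
    obtain ⟨y1, hy10, hy1a, hty1⟩ := hunb t
    have hy0 : min t 0 ≤ y1 := le_trans (min_le_right t 0) hy10
    have hFy0 : F (min t 0) = min t 0 := hF_neg _ (min_le_right t 0)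
    have hsubI : Icc (min t 0) y1 ⊆ Iio a := fun s hs => lt_of_le_of_lt hs.2 hy1a
    have hIVT := intermediate_value_Icc hy0 (hF_co.mono hsubI)
    have htmem : t ∈ Icc (F (min t 0)) (F y1) := ⟨by rw [hFy0]; exact min_le_left t 0, hty1⟩
    obtain ⟨y, hy, hFy⟩ := hIVT htmem
    exact ⟨y, lt_of_le_of_lt hy.2 hy1a, hFy⟩
  choose v hva hvF using hsurj
  have hFinj : InjOn F (Iio a) := hF_mono.injOn
  have hvF' : ∀ y < a, v (F y) = y := fun y hy => hFinj (hva _) hy (hvF (F y))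
  have hv0 : v 0 = 0 := by have := hvF' 0 ha0; rwa [hF0] at this
  have hvmono : StrictMono v := by
    intro t1 t2 h
    exact (hF_mono.lt_iff_lt (hva t1) (hva t2)).mp (by rw [hvF, hvF]; exact h)
  have hvnn : ∀ t : ℝ, 0 ≤ t → 0 ≤ v t := by
    intro t ht
    have := hvmono.monotone ht
    rwa [hv0] at this
  have hvrange : range v = Iio a := by
    apply subset_antisymm
    · rintro _ ⟨t, rfl⟩; exact hva t
    · intro y hy; exact ⟨F y, hvF' y hy⟩
  have hv_cont : ∀ t, ContinuousAt v t := by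
    intro t
    apply (hvmono.strictMonoOn univ).continuousAt_of_image_mem_nhds Filter.univ_mem
    rw [image_univ, hvrange]
    exact Iio_mem_nhds (hva t)
  have hv_deriv : ∀ t, HasDerivAt v (g (v t))⁻¹ t := fun t =>
    HasDerivAt.of_local_left_inverse (hv_cont t) (hF_deriv (v t) (hva t))
      (hg_pos _ (hva t)).ne' (Filter.Eventually.of_forall hvF)
  have hgv : ∀ y : ℝ, 0 ≤ y → (g y)⁻¹ = (1 - c * y ^ (k + 1)) ^ q := by
    intro y hy
    simp only [hg_def, hP_def, inv_inv, max_eq_left hy]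
  have huv : ∀ τ ∈ Ico (0 : ℝ) T, v τ = u τ := by
    have hFu : ∀ t ∈ Ico (0 : ℝ) T, HasDerivAt (fun s => F (u s)) 1 t := by
      intro t ht
      obtain ⟨hu0, hua⟩ := hrange t ht
      have hcomp2 := (hF_deriv (u t) hua).comp t (hode t ht)
      have hval : g (u t) * (1 - c * u t ^ (k + 1)) ^ q = 1 := by
        have hPe : (1 - c * u t ^ (k + 1)) = P (u t) := by
          simp only [hP_def, max_eq_left hu0]
        rw [hPe, hg_def]
        exact inv_mul_cancel₀ (hPq_pos _ hua).ne'
      rwa [hval] at hcomp2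
    intro τ hτ
    obtain ⟨hu0, hua⟩ := hrange τ hτ
    rcases eq_or_lt_of_le hτ.1 with hτ0 | hτ0
    · rw [← hτ0, hv0, h0]
    · have hsubT : Icc (0 : ℝ) τ ⊆ Ico 0 T := fun s hs => ⟨hs.1, lt_of_le_of_lt hs.2 hτ.2⟩
      have hconst := constant_of_has_deriv_right_zero
        (f := fun s => F (u s) - s) (a := 0) (b := τ)
        (fun s hs => ((hFu s (hsubT hs)).sub (hasDerivAt_id s)).continuousAt.continuousWithinAt)
        (by
          intro s hs
          have h1 := (hFu s (hsubT ⟨hs.1, hs.2.le⟩)).sub (hasDerivAt_id s)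
          have h2 : (1 : ℝ) - 1 = 0 := by ring
          rw [h2] at h1
          exact h1.hasDerivWithinAt)
      have hcτ := hconst τ ⟨hτ.1, le_refl τ⟩
      simp only [h0, hF0, sub_zero] at hcτ
      have hFuτ : F (u τ) = τ := by linarith
      exact hFinj (hva τ) hua (by rw [hvF, hFuτ])
  refine ⟨v, hv0, huv, fun t ht => ⟨?_, hvnn t ht, hva t⟩⟩
  have := hv_deriv t
  rwa [hgv (v t) (hvnn t ht)] at this
end

section
/- Let u₁ : [0,∞) → ℝ solve u'' = -u^k (u')^(l-1) u' with u(0)=0, u'(0)=1, where 1 ≤ l < 2, k ≥ 0, k + l > 1, and suppose u' > 0 and the conserved quantity holds. Then u₁(t) → ((k+1)/(2-l))^(1/(k+1)) as t → ∞ and u₁'(t) → 0 as t → ∞. -/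
open Real Set Filter

/-- Asymptotics of the global solution of `u'' = -u^k (u')^(l-1) u'` with data `(0,1)`
when `1 ≤ l < 2`: `u₁(t) → ((k+1)/(2-l))^(1/(k+1))` and `u₁'(t) → 0` as `t → ∞`. -/
theorem stmt_6 (k l : ℝ) (hk : 0 ≤ k) (hl1 : 1 ≤ l) (hl2 : l < 2) (hkl : 1 < k + l)
    (u : ℝ → ℝ) (hu : ContDiff ℝ 2 u) (h0 : u 0 = 0) (h1 : deriv u 0 = 1)
    (hode : ∀ t : ℝ, 0 ≤ t →
      deriv (deriv u) t = -((u t) ^ k * |deriv u t| ^ (l - 1) * deriv u t))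
    (hpos : ∀ t : ℝ, 0 ≤ t → 0 < deriv u t)
    (hmono : MonotoneOn u (Ici (0 : ℝ)))
    (hcons : ∀ t : ℝ, 0 ≤ t →
      (deriv u t) ^ (2 - l) / (2 - l) + (u t) ^ (k + 1) / (k + 1) = 1 / (2 - l)) :
    Tendsto u atTop (nhds (((k + 1) / (2 - l)) ^ ((1 : ℝ) / (k + 1)))) ∧
      Tendsto (deriv u) atTop (nhds 0) := by
  have h2l : (0:ℝ) < 2 - l := by linarith
  have hk1 : (0:ℝ) < k + 1 := by linarith
  set M : ℝ := ((k + 1) / (2 - l)) ^ ((1 : ℝ) / (k + 1)) with hM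
  -- nonnegativity and boundedness of u
  have hunn : ∀ t : ℝ, 0 ≤ t → 0 ≤ u t := by
    intro t ht
    have := hmono (self_mem_Ici) (mem_Ici.mpr ht) ht
    simpa [h0] using this
  have hub' : ∀ t : ℝ, 0 ≤ t → (u t) ^ (k + 1) ≤ (k + 1) / (2 - l) := by
    intro t ht
    have hc := hcons t ht
    have hd : 0 ≤ (deriv u t) ^ (2 - l) / (2 - l) :=
      div_nonneg (Real.rpow_nonneg (hpos t ht).le _) h2l.le
    have h' : (u t) ^ (k + 1) / (k + 1) ≤ 1 / (2 - l) := by linarith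
    rw [div_le_div_iff₀ hk1 h2l] at h'
    rw [le_div_iff₀ h2l]
    linarith
  have hub : ∀ t : ℝ, 0 ≤ t → u t ≤ M := by
    intro t ht
    have h1' : u t = ((u t) ^ (k + 1)) ^ ((k+1:ℝ))⁻¹ :=
      (Real.rpow_rpow_inv (hunn t ht) hk1.ne').symm
    rw [h1', hM, one_div]
    exact Real.rpow_le_rpow (Real.rpow_nonneg (hunn t ht) _) (hub' t ht)
      (inv_nonneg.mpr hk1.le)
  -- limit of u
  set v : ℝ → ℝ := fun t => u (max t 0) with hv
  have hvmono : Monotone v := fun s t hst =>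
    hmono (le_max_right s 0) (le_max_right t 0) (max_le_max hst le_rfl)
  have hvbdd : BddAbove (range v) := ⟨M, by rintro x ⟨t, rfl⟩; exact hub _ (le_max_right t 0)⟩
  have hvtend : Tendsto v atTop (nhds (⨆ t, v t)) := tendsto_atTop_ciSup hvmono hvbdd
  set L : ℝ := ⨆ t, v t with hL
  have hveq : v =ᶠ[atTop] u := by
    filter_upwards [Ici_mem_atTop (0:ℝ)] with t ht
    simp [hv, max_eq_left (mem_Ici.mp ht)]
  have hutend : Tendsto u atTop (nhds L) := hvtend.congr' hveq
  have hL0 : 0 ≤ L := by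
    have : v 0 ≤ L := le_ciSup hvbdd 0
    simpa [hv, h0] using this
  -- limit of (deriv u)^(2-l)
  set B : ℝ := 1 - (2 - l) * L ^ (k + 1) / (k + 1) with hB
  have hdeq : ∀ t : ℝ, 0 ≤ t →
      (deriv u t) ^ (2 - l) = 1 - (2 - l) * (u t) ^ (k + 1) / (k + 1) := by
    intro t ht
    have hc := hcons t ht
    have e1 : (deriv u t) ^ (2 - l) / (2 - l) = 1 / (2 - l) - (u t) ^ (k + 1) / (k + 1) := by
      linarith
    calc (deriv u t) ^ (2 - l) = ((deriv u t) ^ (2 - l) / (2 - l)) * (2 - l) := by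
          field_simp
      _ = (1 / (2 - l) - (u t) ^ (k + 1) / (k + 1)) * (2 - l) := by rw [e1]
      _ = 1 - (2 - l) * (u t) ^ (k + 1) / (k + 1) := by field_simp
  have hBtend : Tendsto (fun t => (deriv u t) ^ (2 - l)) atTop (nhds B) := by
    have h1' : Tendsto (fun t => (u t) ^ (k + 1)) atTop (nhds (L ^ (k + 1))) :=
      hutend.rpow_const (Or.inr hk1.le)
    have h2' : Tendsto (fun t => 1 - (2 - l) * (u t) ^ (k + 1) / (k + 1)) atTop (nhds B) := by
      rw [hB]
      exact (tendsto_const_nhds.sub (((h1'.const_mul (2-l)).div_const (k+1))))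
    refine h2'.congr' ?_
    filter_upwards [Ici_mem_atTop (0:ℝ)] with t ht
    exact (hdeq t (mem_Ici.mp ht)).symm
  have hB0 : 0 ≤ B := by
    refine ge_of_tendsto hBtend ?_
    filter_upwards [Ici_mem_atTop (0:ℝ)] with t ht
    exact Real.rpow_nonneg (hpos t (mem_Ici.mp ht)).le _
  -- limit of deriv u
  have hdtend : Tendsto (deriv u) atTop (nhds (B ^ ((2 - l : ℝ))⁻¹)) := by
    have h1' : Tendsto (fun t => ((deriv u t) ^ (2 - l)) ^ ((2 - l : ℝ))⁻¹) atTop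
        (nhds (B ^ ((2 - l : ℝ))⁻¹)) := hBtend.rpow_const (Or.inr (inv_nonneg.mpr h2l.le))
    refine h1'.congr' ?_
    filter_upwards [Ici_mem_atTop (0:ℝ)] with t ht
    exact Real.rpow_rpow_inv (hpos t (mem_Ici.mp ht)).le h2l.ne'
  -- B = 0
  have hBz : B = 0 := by
    by_contra hne
    have hBpos : 0 < B := lt_of_le_of_ne hB0 (Ne.symm hne)
    set d : ℝ := B ^ ((2 - l : ℝ))⁻¹ with hd
    have hdpos : 0 < d := Real.rpow_pos_of_pos hBpos _
    have hev : ∀ᶠ t in atTop, d / 2 ≤ deriv u t ∧ (0:ℝ) ≤ t := by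
      filter_upwards [hdtend.eventually (eventually_gt_nhds (half_lt_self hdpos)),
        Ici_mem_atTop (0:ℝ)] with t h1' h2'
      exact ⟨h1'.le, mem_Ici.mp h2'⟩
    obtain ⟨T, hT⟩ := hev.exists_forall_of_atTop
    have hdiff : Differentiable ℝ u := hu.differentiable (by norm_num)
    have hgmono : MonotoneOn (fun t => u t - d / 2 * t) (Ici T) := by
      refine monotoneOn_of_deriv_nonneg (convex_Ici T)
        ((hdiff.continuous.sub (continuous_const.mul continuous_id)).continuousOn)
        (((hdiff.sub ((differentiable_id.const_mul _))).differentiableOn)) ?_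
      intro x hx
      rw [interior_Ici] at hx
      have hx' : T ≤ x := (mem_Ioi.mp hx).le
      have hder : deriv (fun t => u t - d / 2 * t) x = deriv u x - d / 2 := by
        have := ((hdiff x).hasDerivAt.sub ((hasDerivAt_id x).const_mul (d/2))).deriv
        exact this.trans (by ring)
      rw [hder]
      linarith [(hT x hx').1]
    have hgrow : ∀ t, T ≤ t → u T + d / 2 * (t - T) ≤ u t := by
      intro t ht
      have := hgmono (self_mem_Ici) (mem_Ici.mpr ht) ht
      simp only at this
      linarith
    have hblow : Tendsto u atTop atTop := by
      have haux : Tendsto (fun t => u T + d / 2 * (t - T)) atTop atTop := by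
        apply tendsto_atTop_add_const_left
        exact (tendsto_atTop_add_const_right _ (-T) tendsto_id).const_mul_atTop (by linarith)
      refine tendsto_atTop_mono' atTop ?_ haux
      filter_upwards [Ici_mem_atTop T] with t ht
      have := hgrow t (mem_Ici.mp ht)
      simpa [sub_eq_add_neg] using this
    exact not_tendsto_atTop_of_tendsto_nhds hutend hblow
  -- conclude
  have hLM : L = M := by
    have hLk : L ^ (k + 1) = (k + 1) / (2 - l) := by
      have : (2 - l) * L ^ (k + 1) / (k + 1) = 1 := by
        have := hBz; rw [hB] at this; linarith
      field_simp at this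
      field_simp
      linarith
    rw [hM, ← hLk, one_div]
    exact (Real.rpow_rpow_inv hL0 hk1.ne').symm
  constructor
  · rw [← hLM]; exact hutend
  · have : B ^ ((2 - l : ℝ))⁻¹ = 0 := by
      rw [hBz]
      exact Real.zero_rpow (inv_ne_zero h2l.ne')
    rw [← this]; exact hdtend
end
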